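/- (Lemma 1, one-step variance Bellman inequality.) Fix a time-step h and a state-action pair (s,a). Suppose: (i) |Q̂^{h+1}_{s'a'}(ω)| ≤ Q_max almost surely for every (s',a'); (ii) μ̂^h_{sa} is independent of the random vector (P̂^h_{s' s a} · Q̂^{h+1}_{s'a'})_{s',a'}; (iii) for every (s',a'), the random variables P̂^h_{s' s a} and Q̂^{h+1}_{s'a'} are independent; (iv) E[P̂^h_{s' s a}] > 0 for every s'. Then Var(Q̂^h_{sa}) ≤ ν^h_{sa} + Σ_{s',a'} π^h_{s'a'} E[P̂^h_{s' s a}] · Var(Q̂^{h+1}_{s'a'}), where ν^h_{sa} = Var(μ̂^h_{sa}) + Q_max² Σ_{s'} Var(P̂^h_{s' s a}) / E[P̂^h_{s' s a}]. -/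

import Mathlib

/-!
Since `μ` is independent of the next-step term `Y = ∑ π P Q'`, the variance splits as
`Var μ + Var Y`. Writing `Y = ∑ w (P Q' / 𝔼 P)` with weights `w = π 𝔼 P`, which sum to one,
Jensen's inequality for `x ↦ x²` bounds `Var Y` by `∑ π Var (P Q') / 𝔼 P`. For independent `P`
and `Q'` with `|Q'| ≤ Qmax` one has `Var (P Q') = Var P 𝔼[Q'²] + (𝔼 P)² Var Q'`, and
`𝔼[Q'²] ≤ Qmax²`.
-/

open MeasureTheory ProbabilityTheory
open scoped ENNReal

namespace ProbabilityTheory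

variable {Ω ι : Type*} {m : MeasurableSpace Ω} {μ : Measure Ω}

lemma IndepFun.memLp_two_mul {X Y : Ω → ℝ} (hXY : IndepFun X Y μ) (hX : MemLp X 2 μ)
    (hY : MemLp Y 2 μ) : MemLp (X * Y) 2 μ := by
  have hXY_sq : IndepFun (fun ω ↦ X ω ^ 2) (fun ω ↦ Y ω ^ 2) μ :=
    hXY.comp (measurable_id.pow_const 2) (measurable_id.pow_const 2)
  rw [memLp_two_iff_integrable_sq (hX.aestronglyMeasurable.mul hY.aestronglyMeasurable)]
  simp only [Pi.mul_apply, mul_pow]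
  exact hXY_sq.integrable_mul hX.integrable_sq hY.integrable_sq

lemma memLp_of_ae_nonneg_of_sum_eq_one [Fintype ι] [IsFiniteMeasure μ] {P : ι → Ω → ℝ}
    (hP : ∀ i, AEStronglyMeasurable (P i) μ) (h₀ : ∀ᵐ ω ∂μ, ∀ i, 0 ≤ P i ω)
    (h₁ : ∀ᵐ ω ∂μ, ∑ i, P i ω = 1) (i : ι) {p : ℝ≥0∞} : MemLp (P i) p μ := by
  refine MemLp.of_bound (hP i) 1 ?_
  filter_upwards [h₀, h₁] with ω hω₀ hω₁
  rw [Real.norm_of_nonneg (hω₀ i), ← hω₁]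
  exact Finset.single_le_sum (fun j _ ↦ hω₀ j) (Finset.mem_univ i)

variable [IsProbabilityMeasure μ]

lemma sum_integral_eq_one_of_ae_sum_eq_one [Fintype ι] {P : ι → Ω → ℝ}
    (hP : ∀ i, Integrable (P i) μ) (h₁ : ∀ᵐ ω ∂μ, ∑ i, P i ω = 1) : ∑ i, μ[P i] = 1 := by
  rw [← integral_finsetSum _ fun i _ ↦ hP i, integral_congr_ae h₁]
  simp

lemma variance_sum_mul_le {s : Finset ι} {w : ι → ℝ} {X : ι → Ω → ℝ}
    (hw₀ : ∀ i ∈ s, 0 ≤ w i) (hw₁ : ∑ i ∈ s, w i = 1) (hX : ∀ i ∈ s, MemLp (X i) 2 μ) :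
    Var[fun ω ↦ ∑ i ∈ s, w i * X i ω; μ] ≤ ∑ i ∈ s, w i * Var[X i; μ] := by
  have hX_int (i) (hi : i ∈ s) : Integrable (X i) μ := (hX i hi).integrable one_le_two
  have hmean : μ[fun ω ↦ ∑ i ∈ s, w i * X i ω] = ∑ i ∈ s, w i * μ[X i] := by
    rw [integral_finsetSum _ fun i hi ↦ (hX_int i hi).const_mul _]
    simp_rw [integral_const_mul]
  have hjensen (ω : Ω) : (∑ i ∈ s, w i * X i ω - ∑ i ∈ s, w i * μ[X i]) ^ 2 ≤
      ∑ i ∈ s, w i * (X i ω - μ[X i]) ^ 2 := by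
    simpa [mul_sub, Finset.sum_sub_distrib] using
      (even_two.convexOn_pow (𝕜 := ℝ)).map_sum_le (p := fun i ↦ X i ω - μ[X i]) hw₀ hw₁
        fun i _ ↦ Set.mem_univ _
  have hsum_L2 : MemLp (fun ω ↦ ∑ i ∈ s, w i * X i ω) 2 μ :=
    memLp_finsetSum s fun i hi ↦ (hX i hi).const_mul _
  have hdev_int (i) (hi : i ∈ s) : Integrable (fun ω ↦ (X i ω - μ[X i]) ^ 2) μ :=
    ((hX i hi).sub (memLp_const _)).integrable_sq
  rw [variance_eq_integral hsum_L2.aemeasurable, hmean]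
  calc ∫ ω, (∑ i ∈ s, w i * X i ω - ∑ i ∈ s, w i * μ[X i]) ^ 2 ∂μ
      ≤ ∫ ω, ∑ i ∈ s, w i * (X i ω - μ[X i]) ^ 2 ∂μ :=
        integral_mono (hsum_L2.sub (memLp_const _)).integrable_sq
          (integrable_finsetSum _ fun i hi ↦ (hdev_int i hi).const_mul _) hjensen
    _ = ∑ i ∈ s, w i * Var[X i; μ] := by
        rw [integral_finsetSum _ fun i hi ↦ (hdev_int i hi).const_mul _]
        refine Finset.sum_congr rfl fun i hi ↦ ?_
        rw [integral_const_mul, variance_eq_integral (hX i hi).aemeasurable]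

lemma IndepFun.variance_mul {X Y : Ω → ℝ} (hXY : IndepFun X Y μ) (hX : MemLp X 2 μ)
    (hY : MemLp Y 2 μ) : Var[X * Y; μ] = Var[X; μ] * μ[Y ^ 2] + μ[X] ^ 2 * Var[Y; μ] := by
  have hXY_sq : IndepFun (fun ω ↦ X ω ^ 2) (fun ω ↦ Y ω ^ 2) μ :=
    hXY.comp (measurable_id.pow_const 2) (measurable_id.pow_const 2)
  rw [variance_eq_sub (hXY.memLp_two_mul hX hY), variance_eq_sub hX, variance_eq_sub hY]
  simp only [Pi.pow_apply, Pi.mul_apply, mul_pow]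
  rw [hXY_sq.integral_fun_mul_eq_mul_integral (hX.aestronglyMeasurable.pow 2)
      (hY.aestronglyMeasurable.pow 2),
    hXY.integral_fun_mul_eq_mul_integral hX.aestronglyMeasurable hY.aestronglyMeasurable]
  ring

lemma integral_sq_le_of_abs_le {Y : Ω → ℝ} {C : ℝ} (hY : AEStronglyMeasurable Y μ)
    (hYC : ∀ᵐ ω ∂μ, |Y ω| ≤ C) : μ[Y ^ 2] ≤ C ^ 2 := by
  have hY_L2 : MemLp Y 2 μ := MemLp.of_bound hY C (by simpa only [Real.norm_eq_abs] using hYC)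
  calc μ[Y ^ 2] ≤ ∫ _, C ^ 2 ∂μ := by
        refine integral_mono_ae hY_L2.integrable_sq (integrable_const _) ?_
        filter_upwards [hYC] with ω hω
        exact sq_le_sq' (neg_le_of_abs_le hω) (le_of_abs_le hω)
    _ = C ^ 2 := by simp

lemma IndepFun.variance_mul_le {X Y : Ω → ℝ} {C : ℝ} (hXY : IndepFun X Y μ) (hX : MemLp X 2 μ)
    (hY : MemLp Y 2 μ) (hYC : ∀ᵐ ω ∂μ, |Y ω| ≤ C) :
    Var[X * Y; μ] ≤ C ^ 2 * Var[X; μ] + μ[X] ^ 2 * Var[Y; μ] := by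
  rw [hXY.variance_mul hX hY, mul_comm (C ^ 2)]
  gcongr
  · exact variance_nonneg X μ
  · exact integral_sq_le_of_abs_le hY.aestronglyMeasurable hYC

lemma variance_sum_mul_mul_le [Fintype ι] {c : ι → ℝ} {X Y : ι → Ω → ℝ} {C : ℝ}
    (hc : ∀ i, 0 ≤ c i) (hX : ∀ i, MemLp (X i) 2 μ) (hY : ∀ i, MemLp (Y i) 2 μ)
    (hYC : ∀ i, ∀ᵐ ω ∂μ, |Y i ω| ≤ C) (hXY : ∀ i, IndepFun (X i) (Y i) μ)
    (hX_pos : ∀ i, 0 < μ[X i]) (hsum : ∑ i, c i * μ[X i] = 1) :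
    Var[fun ω ↦ ∑ i, c i * (X i ω * Y i ω); μ] ≤
      ∑ i, c i * (C ^ 2 * Var[X i; μ] / μ[X i] + μ[X i] * Var[Y i; μ]) := by
  have hconvex : (fun ω ↦ ∑ i, c i * (X i ω * Y i ω)) =
      fun ω ↦ ∑ i, c i * μ[X i] * ((μ[X i])⁻¹ * (X i * Y i) ω) := by
    ext ω
    refine Finset.sum_congr rfl fun i _ ↦ ?_
    rw [Pi.mul_apply]
    field_simp [(hX_pos i).ne']
  rw [hconvex]
  calc _ ≤ ∑ i, c i * μ[X i] * Var[fun ω ↦ (μ[X i])⁻¹ * (X i * Y i) ω; μ] :=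
        variance_sum_mul_le (fun i _ ↦ mul_nonneg (hc i) (hX_pos i).le) hsum
          fun i _ ↦ ((hXY i).memLp_two_mul (hX i) (hY i)).const_mul _
    _ = ∑ i, c i * (Var[X i * Y i; μ] / μ[X i]) := by
        refine Finset.sum_congr rfl fun i _ ↦ ?_
        rw [variance_const_mul]
        field_simp [(hX_pos i).ne']
    _ ≤ ∑ i, c i * ((C ^ 2 * Var[X i; μ] + μ[X i] ^ 2 * Var[Y i; μ]) / μ[X i]) := by
        gcongr with i
        · exact hc i
        · exact (hX_pos i).le
        · exact (hXY i).variance_mul_le (hX i) (hY i) (hYC i)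
    _ = _ := by
        refine Finset.sum_congr rfl fun i _ ↦ ?_
        field_simp [(hX_pos i).ne']

end ProbabilityTheory

theorem variance_bellman_inequality_general
    {Ω : Type*} [MeasureSpace Ω] [IsProbabilityMeasure (ℙ : Measure Ω)]
    {S A : Type*} [Fintype S] [Fintype A]
    (Qmax : ℝ)
    (π : S → A → ℝ)
    (hπ_nonneg : ∀ s a, 0 ≤ π s a)
    (hπ_sum : ∀ s, ∑ a : A, π s a = 1)
    (μ : Ω → ℝ) (P : S → Ω → ℝ) (Q' : S → A → Ω → ℝ)
    (hμ_L2 : MemLp μ 2 ℙ)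
    (hP_meas : ∀ s', Measurable (P s'))
    (hQ'_meas : ∀ s' a', Measurable (Q' s' a'))
    (hP_nonneg : ∀ᵐ ω ∂ℙ, ∀ s', 0 ≤ P s' ω)
    (hP_sum : ∀ᵐ ω ∂ℙ, ∑ s' : S, P s' ω = 1)
    (hQ'_bdd : ∀ s' a', ∀ᵐ ω ∂ℙ, |Q' s' a' ω| ≤ Qmax)
    (hindep_μ : IndepFun μ (fun ω => fun sa : S × A => P sa.1 ω * Q' sa.1 sa.2 ω) ℙ)
    (hindep_PQ : ∀ s' a', IndepFun (P s') (Q' s' a') ℙ)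
    (hEP_pos : ∀ s', 0 < ∫ ω, P s' ω) :
    variance (fun ω => μ ω + ∑ s' : S, ∑ a' : A, π s' a' * P s' ω * Q' s' a' ω) ℙ ≤
      (variance μ ℙ + Qmax ^ 2 * ∑ s' : S, variance (P s') ℙ / ∫ ω, P s' ω) +
        ∑ s' : S, ∑ a' : A, π s' a' * (∫ ω, P s' ω) * variance (Q' s' a') ℙ := by
  have hP_L2 (s' : S) : MemLp (P s') 2 ℙ :=
    memLp_of_ae_nonneg_of_sum_eq_one (fun s' ↦ (hP_meas s').aestronglyMeasurable) hP_nonneg hP_sum s'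
  have hQ'_L2 (s' : S) (a' : A) : MemLp (Q' s' a') 2 ℙ :=
    MemLp.of_bound (hQ'_meas s' a').aestronglyMeasurable Qmax (by simpa using hQ'_bdd s' a')
  have hEP_sum : ∑ s', ∫ ω, P s' ω = 1 :=
    sum_integral_eq_one_of_ae_sum_eq_one (fun s' ↦ (hP_L2 s').integrable one_le_two) hP_sum
  set Y : Ω → ℝ := fun ω ↦ ∑ sa : S × A, π sa.1 sa.2 * (P sa.1 ω * Q' sa.1 sa.2 ω) with hY
  have hY_L2 : MemLp Y 2 ℙ := memLp_finsetSum _ fun sa _ ↦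
    ((hindep_PQ sa.1 sa.2).memLp_two_mul (hP_L2 sa.1) (hQ'_L2 sa.1 sa.2)).const_mul _
  have hμY : IndepFun μ Y ℙ :=
    hindep_μ.comp measurable_id (by fun_prop : Measurable fun f : S × A → ℝ ↦ ∑ sa, π sa.1 sa.2 * f sa)
  have hY_var := variance_sum_mul_mul_le (μ := ℙ) (c := fun sa : S × A ↦ π sa.1 sa.2)
    (fun sa ↦ hπ_nonneg sa.1 sa.2) (fun sa ↦ hP_L2 sa.1) (fun sa ↦ hQ'_L2 sa.1 sa.2)
    (fun sa ↦ hQ'_bdd sa.1 sa.2) (fun sa ↦ hindep_PQ sa.1 sa.2) (fun sa ↦ hEP_pos sa.1)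
    (by simp only [Fintype.sum_prod_type, ← Finset.sum_mul, hπ_sum, one_mul, hEP_sum])
  calc _ = variance μ ℙ + variance Y ℙ := by
        rw [← hμY.variance_add hμ_L2 hY_L2]
        congr 1
        ext ω
        simp only [hY, Pi.add_apply, Fintype.sum_prod_type, mul_assoc]
    _ ≤ _ := by
        rw [add_assoc]
        gcongr
        refine hY_var.trans_eq ?_
        simp only [Fintype.sum_prod_type, mul_add, Finset.sum_add_distrib, ← Finset.sum_mul, hπ_sum,
          one_mul, Finset.mul_sum, mul_div_assoc, mul_assoc]

/-- **Lemma 1, one-step variance Bellman inequality.**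
Fix a time-step `h` and a state-action pair `(s,a)`. Writing `μ̂ = μ` for the
random mean reward at `(s,a)`, `P s'` for the random transition probability to
`s'`, and `Q' s' a'` for the random Q-value at the next step, suppose:
(i) `|Q' s' a'| ≤ Qmax` a.s.; (ii) `μ` is independent of the random vector
`(P s' * Q' s' a')_{s',a'}`; (iii) `P s'` and `Q' s' a'` are independent for
every `(s',a')`; (iv) `E[P s'] > 0` for every `s'`. Then
`Var(Q̂ h s a) ≤ ν + ∑_{s',a'} π s' a' * E[P s'] * Var(Q' s' a')` where
`Q̂ h s a = μ + ∑_{s',a'} π s' a' * P s' * Q' s' a'` and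
`ν = Var(μ) + Qmax² ∑_{s'} Var(P s') / E[P s']`. -/
theorem variance_bellman_inequality
    {Ω : Type*} [MeasureSpace Ω] [IsProbabilityMeasure (ℙ : Measure Ω)]
    {S A : Type*} [Fintype S] [Fintype A]
    (Qmax : ℝ) (hQmax : 0 < Qmax)
    (π : S → A → ℝ)
    (hπ_nonneg : ∀ s a, 0 ≤ π s a)
    (hπ_sum : ∀ s, ∑ a : A, π s a = 1)
    (μ : Ω → ℝ) (P : S → Ω → ℝ) (Q' : S → A → Ω → ℝ)
    (hμ_meas : Measurable μ)
    (hμ_L2 : MemLp μ 2 ℙ)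
    (hP_meas : ∀ s', Measurable (P s'))
    (hQ'_meas : ∀ s' a', Measurable (Q' s' a'))
    (hP_nonneg : ∀ᵐ ω ∂ℙ, ∀ s', 0 ≤ P s' ω)
    (hP_sum : ∀ᵐ ω ∂ℙ, ∑ s' : S, P s' ω = 1)
    (hQ'_bdd : ∀ s' a', ∀ᵐ ω ∂ℙ, |Q' s' a' ω| ≤ Qmax)
    (hindep_μ : IndepFun μ (fun ω => fun sa : S × A => P sa.1 ω * Q' sa.1 sa.2 ω) ℙ)
    (hindep_PQ : ∀ s' a', IndepFun (P s') (Q' s' a') ℙ)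
    (hEP_pos : ∀ s', 0 < ∫ ω, P s' ω) :
    variance (fun ω => μ ω + ∑ s' : S, ∑ a' : A, π s' a' * P s' ω * Q' s' a' ω) ℙ ≤
      (variance μ ℙ + Qmax ^ 2 * ∑ s' : S, variance (P s') ℙ / ∫ ω, P s' ω) +
        ∑ s' : S, ∑ a' : A, π s' a' * (∫ ω, P s' ω) * variance (Q' s' a') ℙ :=
  variance_bellman_inequality_general Qmax π hπ_nonneg hπ_sum μ P Q' hμ_L2 hP_meas hQ'_meas
    hP_nonneg hP_sum hQ'_bdd hindep_μ hindep_PQ hEP_pos
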